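/- Let a, b, a₁, b₁ ∈ ℝ with b ≠ 0 and b₁ ≠ 0. Let f ∈ ℝ[[X]] have constant term 0 and be the compositional inverse of f̄ = X·(1 + aX + bX²)⁻¹, set g = (1 − a₁X − b₁X·f)⁻¹, let h = (g∘f̄)⁻¹, and define p_n(X) = ∑_{k=0}^{n} ([Xⁿ](h·f̄ᵏ))·Xᵏ ∈ ℝ[X]. If 𝓛 : ℝ[X] → ℝ is any linear functional with 𝓛(p_0) = 1 and 𝓛(p_i) = 0 for all i ≥ 1 (the moment functional of the orthogonal family p_n), then for every n ∈ ℕ, 𝓛(Xⁿ) = [Xⁿ]g. In other words, the moments of the orthogonal polynomial family defined by L⁻¹ = (g,f)⁻¹ are the entries of the first column of L = (g,f). -/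

import Mathlib

/-!
`(h, f̄)` is the Riordan inverse of `L = (g, f)`: substituting `f` into `h · (g ∘ f̄) = 1` gives
`g · (h ∘ f) = 1`, so the `j`-th column of `L · L⁻¹` is the coefficient sequence of
`g · (h f̄ʲ) ∘ f = Xʲ`. Since the rows of `L⁻¹` are the coefficients of the `p_k`, this says
`Xⁿ = ∑ₖ L(n, k) p_k`, and applying `𝓛` leaves only `L(n, 0) = [Xⁿ] g`.
-/

noncomputable def psComp (h u : PowerSeries ℝ) : PowerSeries ℝ :=
  PowerSeries.mk fun n =>
    ∑ k ∈ Finset.range (n + 1), PowerSeries.coeff k h * PowerSeries.coeff n (u ^ k)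

open PowerSeries Finset

lemma coeff_mul_pow_eq_zero_of_lt {R : Type*} [CommSemiring R] {u : R⟦X⟧}
    (hu : constantCoeff u = 0) (w : R⟦X⟧) {n k : ℕ} (hnk : n < k) :
    coeff n (w * u ^ k) = 0 := by
  obtain ⟨t, rfl⟩ := X_dvd_iff.2 hu
  rw [mul_pow, mul_left_comm, coeff_X_pow_mul', if_neg (by omega)]

lemma coeff_pow_eq_zero_of_lt {R : Type*} [CommSemiring R] {u : R⟦X⟧}
    (hu : constantCoeff u = 0) {n k : ℕ} (hnk : n < k) : coeff n (u ^ k) = 0 := by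
  simpa using coeff_mul_pow_eq_zero_of_lt hu 1 hnk

lemma coeff_psComp (v u : ℝ⟦X⟧) (n : ℕ) :
    coeff n (psComp v u) = ∑ k ∈ range (n + 1), coeff k v * coeff n (u ^ k) :=
  coeff_mk _ _

lemma constantCoeff_psComp (v u : ℝ⟦X⟧) : constantCoeff (psComp v u) = constantCoeff v := by
  simpa using coeff_psComp v u 0

lemma psComp_eq_subst {u : ℝ⟦X⟧} (hu : constantCoeff u = 0) (v : ℝ⟦X⟧) :
    psComp v u = v.subst u := by
  ext n
  rw [coeff_psComp, coeff_subst' (HasSubst.of_constantCoeff_zero' hu),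
    finsum_eq_sum_of_support_subset (s := range (n + 1)) _ fun k hk => ?_]
  · simp only [smul_eq_mul]
  · by_contra hkn
    simp only [coe_range, Set.mem_Iio, not_lt] at hkn
    exact hk (by simp [coeff_pow_eq_zero_of_lt hu (show n < k by omega)])

noncomputable def riordan {R : Type*} [CommSemiring R] (g f : R⟦X⟧) (n k : ℕ) : R :=
  coeff n (g * f ^ k)

lemma coeff_mul_psComp {u : ℝ⟦X⟧} (hu : constantCoeff u = 0) (w v : ℝ⟦X⟧) (n : ℕ) :
    coeff n (w * psComp v u) = ∑ k ∈ range (n + 1), coeff k v * riordan w u n k := by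
  set P := ∑ k ∈ range (n + 1), C (coeff k v) * u ^ k
  obtain ⟨q, hq⟩ : X ^ (n + 1) ∣ psComp v u - P := by
    refine X_pow_dvd_iff.2 fun m hm => ?_
    rw [map_sub, coeff_psComp, map_sum, sub_eq_zero]
    simp only [coeff_C_mul]
    refine sum_subset (range_subset_range.2 (by omega)) fun k hk hkm => ?_
    rw [coeff_pow_eq_zero_of_lt hu (by simpa using hkm), mul_zero]
  rw [sub_eq_iff_eq_add.1 hq, mul_add, map_add, mul_left_comm, mul_comm,
    coeff_mul_pow_eq_zero_of_lt constantCoeff_X _ (lt_add_one n), zero_add, mul_sum, map_sum]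
  exact sum_congr rfl fun k _ => by rw [mul_left_comm, coeff_C_mul, riordan]

section RiordanInverse

variable {f fbar g h : ℝ⟦X⟧}

lemma mul_subst_eq_one_of_mul_subst_eq_one (hf : constantCoeff f = 0)
    (hfbar : constantCoeff fbar = 0) (hfinv : fbar.subst f = X) (hgh : h * g.subst fbar = 1) :
    g * h.subst f = 1 := by
  have hf' := HasSubst.of_constantCoeff_zero' hf
  have := congr_arg (substAlgHom hf') hgh
  rwa [map_mul, map_one, coe_substAlgHom,
    subst_comp_subst_apply (HasSubst.of_constantCoeff_zero' hfbar) hf', hfinv, X_subst,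
    mul_comm] at this

lemma sum_riordan_mul_riordan (hf : constantCoeff f = 0)
    (hfinv : fbar.subst f = X) (hgh : g * h.subst f = 1) (n j : ℕ) :
    ∑ k ∈ range (n + 1), riordan g f n k * riordan h fbar k j = if n = j then 1 else 0 := by
  have hf' := HasSubst.of_constantCoeff_zero' hf
  have hcol : g * (h * fbar ^ j).subst f = X ^ j := by
    rw [subst_mul hf', subst_pow hf', hfinv, ← mul_assoc, hgh, one_mul]
  rw [← coeff_X_pow, ← hcol, ← psComp_eq_subst hf, coeff_mul_psComp hf]
  exact sum_congr rfl fun k _ => mul_comm _ _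

lemma X_pow_eq_sum_riordan_smul (hf : constantCoeff f = 0) (hfbar : constantCoeff fbar = 0)
    (hfinv : fbar.subst f = X) (hgh : g * h.subst f = 1) (p : ℕ → Polynomial ℝ)
    (hp : ∀ n, p n = ∑ k ∈ range (n + 1),
      Polynomial.C (riordan h fbar n k) * Polynomial.X ^ k) (n : ℕ) :
    Polynomial.X ^ n = ∑ k ∈ range (n + 1), riordan g f n k • p k := by
  have hp_coeff : ∀ k j, (p k).coeff j = riordan h fbar k j := by
    intro k j
    simp only [hp, Polynomial.finsetSum_coeff, Polynomial.coeff_C_mul_X_pow, sum_ite_eq,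
      mem_range, ite_eq_left_iff, not_lt]
    exact fun hkj => (coeff_mul_pow_eq_zero_of_lt hfbar h (by omega)).symm
  ext j
  simp only [Polynomial.finsetSum_coeff, Polynomial.coeff_smul, smul_eq_mul, hp_coeff,
    sum_riordan_mul_riordan hf hfinv hgh, Polynomial.coeff_X_pow, eq_comm]

end RiordanInverse

theorem riordan_moments_first_column_general
    (f fbar g h : PowerSeries ℝ)
    (hf0 : PowerSeries.constantCoeff f = 0)
    (hfinv : psComp fbar f = PowerSeries.X)
    (hh : h = (psComp g fbar)⁻¹)
    (p : ℕ → Polynomial ℝ)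
    (hp : ∀ n, p n = ∑ k ∈ Finset.range (n + 1),
      Polynomial.C (PowerSeries.coeff n (h * fbar ^ k)) * Polynomial.X ^ k)
    (𝓛 : Polynomial ℝ →ₗ[ℝ] ℝ)
    (hL0 : 𝓛 (p 0) = 1)
    (hL : ∀ i, 1 ≤ i → 𝓛 (p i) = 0) :
    ∀ n, 𝓛 (Polynomial.X ^ n) = PowerSeries.coeff n g := by
  have hfbar0 : constantCoeff fbar = 0 := by
    simpa [constantCoeff_psComp] using congr_arg constantCoeff hfinv
  rw [psComp_eq_subst hf0] at hfinv
  -- `p 0 = C h(0)`, and `φ⁻¹ = 0` when `φ(0) = 0`, so `𝓛 (p 0) = 1` rules out `(g ∘ f̄)(0) = 0`.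
  have hh0 : h ≠ 0 := by
    rintro rfl
    simp [hp] at hL0
  have hgh : h * g.subst fbar = 1 := by
    rw [hh, Ne, PowerSeries.inv_eq_zero] at hh0
    rw [hh, ← psComp_eq_subst hfbar0]
    exact PowerSeries.inv_mul_cancel _ hh0
  intro n
  rw [X_pow_eq_sum_riordan_smul hf0 hfbar0 hfinv
      (mul_subst_eq_one_of_mul_subst_eq_one hf0 hfbar0 hfinv hgh) p hp n,
    map_sum, sum_eq_single 0]
  · simp [hL0, riordan]
  · intro k _ hk
    rw [map_smul, hL k (Nat.one_le_iff_ne_zero.2 hk), smul_zero]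
  · simp

/-- If the Riordan array `L = (g, f)` has tridiagonal production matrix, then the
moments of the orthogonal polynomial family whose coefficient array is `L⁻¹` are the
entries of the first column of `L`:  `𝓛(xⁿ) = [xⁿ] g`. -/
theorem riordan_moments_first_column (a b a₁ b₁ : ℝ) (hb : b ≠ 0) (hb₁ : b₁ ≠ 0)
    (f fbar g h : PowerSeries ℝ)
    (hfbar : fbar = PowerSeries.X *
      (1 + PowerSeries.C a * PowerSeries.X + PowerSeries.C b * PowerSeries.X ^ 2)⁻¹)
    (hf0 : PowerSeries.constantCoeff f = 0)
    (hfinv : psComp fbar f = PowerSeries.X)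
    (hg : g = (1 - PowerSeries.C a₁ * PowerSeries.X -
      PowerSeries.C b₁ * PowerSeries.X * f)⁻¹)
    (hh : h = (psComp g fbar)⁻¹)
    (p : ℕ → Polynomial ℝ)
    (hp : ∀ n, p n = ∑ k ∈ Finset.range (n + 1),
      Polynomial.C (PowerSeries.coeff n (h * fbar ^ k)) * Polynomial.X ^ k)
    (𝓛 : Polynomial ℝ →ₗ[ℝ] ℝ)
    (hL0 : 𝓛 (p 0) = 1)
    (hL : ∀ i, 1 ≤ i → 𝓛 (p i) = 0) :
    ∀ n, 𝓛 (Polynomial.X ^ n) = PowerSeries.coeff n g :=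
  riordan_moments_first_column_general f fbar g h hf0 hfinv hh p hp 𝓛 hL0 hL
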